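/- If a clustering instance is α-perturbation resilient to the min-sum objective, then for any three distinct optimal clusters C_i, C_j, C_l and any A ⊆ C_i: α·d_sum(A, C_i\A) < d_sum(C_j, C_l). -/
import Mathlib


/-- A family of `k` finsets forms a partition of `S`. -/
def IsPartition {S : Type*} {k : ℕ} (P : Fin k → Finset S) : Prop :=
  ∀ x : S, ∃! i, x ∈ P i

/-- min-sum cost of a clustering `P` under distance function `d`. -/
def msCost {S : Type*} (d : S → S → ℝ) {k : ℕ} (P : Fin k → Finset S) : ℝ :=
  ∑ i, ∑ p ∈ P i, ∑ q ∈ P i, d p q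

/-- Sum of pairwise distances between two sets. -/
def dsum {S : Type*} (d : S → S → ℝ) (A B : Finset S) : ℝ :=
  ∑ p ∈ A, ∑ q ∈ B, d p q

/-- α-perturbation resilience for min-sum: under every α-perturbation `d'` of `d`, `C` is
the unique optimal min-sum k-clustering (up to relabeling). -/
def MinsumResilient {S : Type*} (d : S → S → ℝ) (α : ℝ) {k : ℕ}
    (C : Fin k → Finset S) : Prop :=
  ∀ d' : S → S → ℝ, (∀ p q : S, d p q ≤ d' p q ∧ d' p q ≤ α * d p q) →
    IsPartition C ∧ ∀ Q : Fin k → Finset S, IsPartition Q →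
      (∃ σ : Equiv.Perm (Fin k), ∀ i, Q i = C (σ i)) ∨ msCost d' C < msCost d' Q

lemma dsum_union_left {S : Type*} [DecidableEq S] (d : S → S → ℝ) (X Y Z : Finset S)
    (h : Disjoint X Y) : dsum d (X ∪ Y) Z = dsum d X Z + dsum d Y Z := by
  simp [dsum, Finset.sum_union h]

lemma dsum_union_right {S : Type*} [DecidableEq S] (d : S → S → ℝ) (X Y Z : Finset S)
    (h : Disjoint Y Z) : dsum d X (Y ∪ Z) = dsum d X Y + dsum d X Z := by
  simp [dsum, Finset.sum_union h, Finset.sum_add_distrib]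

lemma dsum_symm {S : Type*} [MetricSpace S] (X Y : Finset S) :
    dsum dist X Y = dsum dist Y X := by
  simp only [dsum]
  rw [Finset.sum_comm]
  exact Finset.sum_congr rfl fun p _ => Finset.sum_congr rfl fun q _ => dist_comm q p

/-- min-sum α-perturbation resilience implies, for any three distinct
optimal clusters C_i, C_j, C_l and any A ⊆ C_i, α·d_sum(A, C_i\A) < d_sum(C_j, C_l). -/
theorem stmt16 {S : Type*} [MetricSpace S] [Fintype S] [DecidableEq S] {k : ℕ} {α : ℝ}
    (hα : 1 ≤ α) (C : Fin k → Finset S) (hne : ∀ i, (C i).Nonempty)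
    (hres : MinsumResilient dist α C)
    (i j l : Fin k) (hij : i ≠ j) (hil : i ≠ l) (hjl : j ≠ l)
    (A : Finset S) (hA : A ⊆ C i) :
    α * dsum dist A (C i \ A) < dsum dist (C j) (C l) := by
  classical
  set B := C i \ A with hB
  have hAB : Disjoint A B := Finset.disjoint_sdiff
  have hBsub : B ⊆ C i := Finset.sdiff_subset
  have hUnion : A ∪ B = C i := Finset.union_sdiff_of_subset hA
  -- the perturbed distance
  set d' : S → S → ℝ :=
    fun p q => if (p ∈ A ∧ q ∈ B) ∨ (q ∈ A ∧ p ∈ B) then α * dist p q else dist p q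
    with hd'
  have hd'pert : ∀ p q : S, dist p q ≤ d' p q ∧ d' p q ≤ α * dist p q := by
    intro p q
    simp only [hd']
    split
    · exact ⟨le_mul_of_one_le_left dist_nonneg hα, le_refl _⟩
    · exact ⟨le_refl _, le_mul_of_one_le_left dist_nonneg hα⟩
  obtain ⟨hP, hopt⟩ := hres d' hd'pert
  have hdisj : ∀ m n : Fin k, m ≠ n → Disjoint (C m) (C n) := by
    intro m n hmn
    rw [Finset.disjoint_left]
    intro x hxm hxn
    obtain ⟨u, -, hu⟩ := hP x
    exact hmn ((hu m hxm).trans (hu n hxn).symm)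
  -- the competing clustering
  set Q : Fin k → Finset S :=
    fun m => if m = i then A else if m = j then B else if m = l then C j ∪ C l else C m
    with hQ
  have hQi : Q i = A := by simp [hQ]
  have hQj : Q j = B := by simp [hQ, hij.symm]
  have hQl : Q l = C j ∪ C l := by simp [hQ, hil.symm, hjl.symm]
  have hQother : ∀ m, m ≠ i → m ≠ j → m ≠ l → Q m = C m := by
    intro m h1 h2 h3; simp [hQ, h1, h2, h3]
  -- membership in Q characterized
  have hQmem : ∀ (x : S) (m : Fin k), x ∈ Q m →
      (x ∈ A ∧ m = i) ∨ (x ∈ B ∧ m = j) ∨ ((x ∈ C j ∨ x ∈ C l) ∧ m = l) ∨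
      (x ∈ C m ∧ m ≠ i ∧ m ≠ j ∧ m ≠ l) := by
    intro x m
    simp only [hQ]
    split_ifs with h1 h2 h3 <;> intro hx
    · exact Or.inl ⟨hx, h1⟩
    · exact Or.inr (Or.inl ⟨hx, h2⟩)
    · exact Or.inr (Or.inr (Or.inl ⟨by simpa using hx, h3⟩))
    · exact Or.inr (Or.inr (Or.inr ⟨hx, h1, h2, h3⟩))
  have hQpart : IsPartition Q := by
    intro x
    obtain ⟨n, hn, hun⟩ := hP x
    by_cases hni : n = i
    · subst hni
      by_cases hxA : x ∈ A
      · refine ⟨n, by show x ∈ Q n; rwa [hQi], ?_⟩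
        intro m hm
        rcases hQmem x m hm with ⟨-, h⟩ | ⟨hxB, h⟩ | ⟨hxjl, h⟩ | ⟨hxm, h1, -, -⟩
        · exact h
        · exact absurd hxA (Finset.disjoint_right.mp hAB hxB)
        · rcases hxjl with hxj | hxl
          · exact absurd (hun j hxj) hij.symm
          · exact absurd (hun l hxl) hil.symm
        · exact absurd (hun m hxm) h1
      · have hxB : x ∈ B := by rw [hB, Finset.mem_sdiff]; exact ⟨hn, hxA⟩
        refine ⟨j, by show x ∈ Q j; rwa [hQj], ?_⟩
        intro m hm
        rcases hQmem x m hm with ⟨hxA', -⟩ | ⟨-, h⟩ | ⟨hxjl, h⟩ | ⟨hxm, h1', -, -⟩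
        · exact absurd hxA' hxA
        · exact h
        · rcases hxjl with hxj | hxl
          · exact absurd (hun j hxj) hij.symm
          · exact absurd (hun l hxl) hil.symm
        · exact absurd (hun m hxm) h1'
    · -- n ≠ i, so x ∉ C i, hence x ∉ A and x ∉ B
      have hxCi : x ∉ C i := fun h => hni ((hun i h).symm)
      have hxA : x ∉ A := fun h => hxCi (hA h)
      have hxB : x ∉ B := fun h => hxCi (hBsub h)
      by_cases hnjl : n = j ∨ n = l
      · refine ⟨l, ?_, ?_⟩
        · show x ∈ Q l
          rw [hQl, Finset.mem_union]
          rcases hnjl with rfl | rfl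
          · exact Or.inl hn
          · exact Or.inr hn
        · intro m hm
          rcases hQmem x m hm with ⟨hxA', -⟩ | ⟨hxB', -⟩ | ⟨-, h⟩ | ⟨hxm, -, h2, h3⟩
          · exact absurd hxA' hxA
          · exact absurd hxB' hxB
          · exact h
          · rcases hnjl with rfl | rfl
            · exact absurd (hun m hxm) h2
            · exact absurd (hun m hxm) h3
      · push_neg at hnjl
        refine ⟨n, ?_, ?_⟩
        · show x ∈ Q n
          rw [hQother n hni hnjl.1 hnjl.2]; exact hn
        · intro m hm
          rcases hQmem x m hm with ⟨hxA', -⟩ | ⟨hxB', -⟩ | ⟨hxjl, h⟩ | ⟨hxm, -, -, -⟩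
          · exact absurd hxA' hxA
          · exact absurd hxB' hxB
          · rcases hxjl with hxj | hxl
            · exact absurd (hun j hxj) hnjl.1.symm
            · exact absurd (hun l hxl) hnjl.2.symm
          · exact hun m hxm
  rcases hopt Q hQpart with ⟨σ, hσ⟩ | hlt
  · -- relabeling impossible: Q l = C j ∪ C l contains both C j and C l
    exfalso
    have h1 : C j ∪ C l = C (σ l) := by rw [← hQl]; exact hσ l
    obtain ⟨x, hx⟩ := hne j
    obtain ⟨y, hy⟩ := hne l
    have hxσ : x ∈ C (σ l) := by rw [← h1]; exact Finset.mem_union_left _ hx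
    have hyσ : y ∈ C (σ l) := by rw [← h1]; exact Finset.mem_union_right _ hy
    have hσj : σ l = j := by
      by_contra h
      exact Finset.disjoint_left.mp (hdisj (σ l) j h) hxσ hx
    have hσl : σ l = l := by
      by_contra h
      exact Finset.disjoint_left.mp (hdisj (σ l) l h) hyσ hy
    exact hjl (hσj ▸ hσl)
  · -- cost computation
    -- d' agrees with dist except on A×B pairs
    have hkey : ∀ p q : S, ¬((p ∈ A ∧ q ∈ B) ∨ (q ∈ A ∧ p ∈ B)) → d' p q = dist p q := by
      intro p q h; simp only [hd']; rw [if_neg h]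
    have e5 : ∀ X Y : Finset S, (∀ p ∈ X, p ∉ A ∧ p ∉ B) → dsum d' X Y = dsum dist X Y := by
      intro X Y h
      refine Finset.sum_congr rfl fun p hp => Finset.sum_congr rfl fun q hq => ?_
      exact hkey p q (by rintro (⟨h1, -⟩ | ⟨-, h2⟩) <;>
        [exact (h p hp).1 h1; exact (h p hp).2 h2])
    have e1 : dsum d' A A = dsum dist A A := by
      refine Finset.sum_congr rfl fun p hp => Finset.sum_congr rfl fun q hq => ?_
      exact hkey p q (by rintro (⟨-, h1⟩ | ⟨-, h2⟩) <;>
        [exact Finset.disjoint_right.mp hAB h1 hq; exact Finset.disjoint_right.mp hAB h2 hp])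
    have e2 : dsum d' B B = dsum dist B B := by
      refine Finset.sum_congr rfl fun p hp => Finset.sum_congr rfl fun q hq => ?_
      exact hkey p q (by rintro (⟨h1, -⟩ | ⟨h2, -⟩) <;>
        [exact Finset.disjoint_left.mp hAB h1 hp; exact Finset.disjoint_left.mp hAB h2 hq])
    have e3 : dsum d' A B = α * dsum dist A B := by
      simp only [dsum, Finset.mul_sum]
      refine Finset.sum_congr rfl fun p hp => Finset.sum_congr rfl fun q hq => ?_
      simp only [hd']; rw [if_pos (Or.inl ⟨hp, hq⟩)]
    have e4 : dsum d' B A = α * dsum dist A B := by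
      have : dsum d' B A = α * dsum dist B A := by
        simp only [dsum, Finset.mul_sum]
        refine Finset.sum_congr rfl fun p hp => Finset.sum_congr rfl fun q hq => ?_
        simp only [hd']; rw [if_pos (Or.inr ⟨hq, hp⟩)]
      rw [this, dsum_symm B A]
    have hnotCi : ∀ m, m ≠ i → ∀ p ∈ C m, p ∉ A ∧ p ∉ B := by
      intro m hm p hp
      have : p ∉ C i := Finset.disjoint_left.mp (hdisj m i hm) hp
      exact ⟨fun h => this (hA h), fun h => this (hBsub h)⟩
    -- split the cost sums over {i, j, l}
    have hTi : i ∉ ({j, l} : Finset (Fin k)) := by simp [hij, hil]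
    have hTj : j ∉ ({l} : Finset (Fin k)) := by simp [hjl]
    have hsumT : ∀ P : Fin k → Finset S,
        msCost d' P = dsum d' (P i) (P i) + dsum d' (P j) (P j) + dsum d' (P l) (P l)
          + ∑ m ∈ Finset.univ \ {i, j, l}, dsum d' (P m) (P m) := by
      intro P
      have h0 : msCost d' P = ∑ m, dsum d' (P m) (P m) := rfl
      rw [h0, ← Finset.sum_sdiff (Finset.subset_univ ({i, j, l} : Finset (Fin k))),
        Finset.sum_insert hTi, Finset.sum_insert hTj, Finset.sum_singleton]
      ring
    have hrest : ∑ m ∈ Finset.univ \ ({i, j, l} : Finset (Fin k)), dsum d' (Q m) (Q m)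
        = ∑ m ∈ Finset.univ \ ({i, j, l} : Finset (Fin k)), dsum d' (C m) (C m) := by
      refine Finset.sum_congr rfl fun m hm => ?_
      simp only [Finset.mem_sdiff, Finset.mem_insert, Finset.mem_singleton] at hm
      push_neg at hm
      rw [hQother m hm.2.1 hm.2.2.1 hm.2.2.2]
    -- expand g (C i)
    have gCi : dsum d' (C i) (C i)
        = dsum dist A A + dsum dist B B + 2 * (α * dsum dist A B) := by
      rw [← hUnion, dsum_union_left d' A B _ hAB, dsum_union_right d' A A B hAB,
        dsum_union_right d' B A B hAB, e1, e2, e3, e4]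
      ring
    have gCj : dsum d' (C j) (C j) = dsum dist (C j) (C j) :=
      e5 _ _ (hnotCi j hij.symm)
    have gCl : dsum d' (C l) (C l) = dsum dist (C l) (C l) :=
      e5 _ _ (hnotCi l hil.symm)
    have hdisjJL : Disjoint (C j) (C l) := hdisj j l hjl
    have gU : dsum d' (C j ∪ C l) (C j ∪ C l)
        = dsum dist (C j) (C j) + dsum dist (C l) (C l) + 2 * dsum dist (C j) (C l) := by
      have h0 : dsum d' (C j ∪ C l) (C j ∪ C l) = dsum dist (C j ∪ C l) (C j ∪ C l) := by
        refine e5 _ _ fun p hp => ?_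
        rcases Finset.mem_union.mp hp with h | h
        · exact hnotCi j hij.symm p h
        · exact hnotCi l hil.symm p h
      rw [h0, dsum_union_left dist _ _ _ hdisjJL, dsum_union_right dist _ _ _ hdisjJL,
        dsum_union_right dist _ _ _ hdisjJL, dsum_symm (C l) (C j)]
      ring
    rw [hsumT C, hsumT Q, hQi, hQj, hQl, hrest, gCi, gCj, gCl, gU, e1, e2] at hlt
    linarith
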